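/- arXiv:1104.4051 — 7 statements merged into one kernel-verified Lean document; each statement's English description precedes it below -/
import Mathlib

section
/- Let α, γ be real numbers and set β = γ − α. Then the sequence a(α,β,γ;n) satisfies a(α,β,γ;n) = 2γⁿ for every odd n ≥ 3, and a(α,β,γ;n) = 2(αⁿ + γⁿ) for every even n ≥ 4. -/
theorem stmt_7 (α γ : ℝ) (β : ℝ) (hβ : β = γ - α) (a : ℕ → ℝ)
    (ha3 : a 3 = α ^ 3 + β ^ 3 + γ ^ 3 + 3 * α * β * γ)
    (ha4 : a 4 = α ^ 4 + β ^ 4 + γ ^ 4 + 4 * α * β ^ 2 * γ + 2 * α ^ 2 * γ ^ 2)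
    (ha : ∀ m : ℕ, 5 ≤ m → a m = β * a (m - 1) + α * γ * a (m - 2) +
      α ^ (m - 1) * (α - β - γ) + γ ^ (m - 1) * (γ - β - α)) :
    (∀ n : ℕ, 3 ≤ n → Odd n → a n = 2 * γ ^ n) ∧
      (∀ n : ℕ, 4 ≤ n → Even n → a n = 2 * (α ^ n + γ ^ n)) := by
  subst hβ
  set f : ℕ → ℝ := fun n => if Odd n then 2 * γ ^ n else 2 * (α ^ n + γ ^ n) with hf
  have key : ∀ n : ℕ, a (n + 3) = f (n + 3) ∧ a (n + 4) = f (n + 4) := by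
    intro n
    induction n with
    | zero =>
      constructor
      · simp only [hf]
        rw [if_pos (by decide : Odd 3)]
        rw [ha3]; ring
      · simp only [hf]
        rw [if_neg (by decide : ¬ Odd 4)]
        rw [ha4]; ring
    | succ k ih =>
      refine ⟨ih.2, ?_⟩
      have h5 : k + 1 + 4 = k + 5 := by ring
      rw [h5, ha (k + 5) (by omega)]
      have e1 : k + 5 - 1 = k + 4 := by omega
      have e2 : k + 5 - 2 = k + 3 := by omega
      rw [e1, e2, ih.1, ih.2]
      simp only [hf]
      rcases Nat.even_or_odd k with hk | hk
      · -- k even: k+5 odd, k+4 even, k+3 odd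
        obtain ⟨j, rfl⟩ := hk
        have o5 : Odd (j + j + 5) := ⟨j + 2, by omega⟩
        have o3 : Odd (j + j + 3) := ⟨j + 1, by omega⟩
        have n4 : ¬ Odd (j + j + 4) := Nat.not_odd_iff_even.mpr ⟨j + 2, by omega⟩
        simp only [o5, o3, n4, if_true, if_false, ite_true, ite_false]
        have e3 : j + j + 5 = (j + j + 3) + 2 := by omega
        have e4 : j + j + 4 = (j + j + 3) + 1 := by omega
        rw [e3, e4]
        ring
      · obtain ⟨j, rfl⟩ := hk
        have n5 : ¬ Odd (2 * j + 1 + 5) := Nat.not_odd_iff_even.mpr ⟨j + 3, by omega⟩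
        have o4 : Odd (2 * j + 1 + 4) := ⟨j + 2, by omega⟩
        have n3 : ¬ Odd (2 * j + 1 + 3) := Nat.not_odd_iff_even.mpr ⟨j + 2, by omega⟩
        simp only [n5, o4, n3, if_true, if_false, ite_true, ite_false]
        have e3 : 2 * j + 1 + 5 = (2 * j + 1 + 3) + 2 := by omega
        have e4 : 2 * j + 1 + 4 = (2 * j + 1 + 3) + 1 := by omega
        rw [e3, e4]
        ring
  constructor
  · intro n hn ho
    have h : n = (n - 3) + 3 := by omega
    have := (key (n - 3)).1
    rw [← h] at this
    rw [this, hf]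
    simp [ho]
  · intro n hn he
    have h : n = (n - 4) + 4 := by omega
    have := (key (n - 4)).2
    rw [← h] at this
    rw [this, hf]
    simp [Nat.not_odd_iff_even.mpr he]
end

section
/- Let α, γ be real numbers with γ ≥ 0 and α ≥ (2^{1/3} − 1)^{1/4}·γ (so in particular α ≥ 0). Then for every integer n ≥ 4 divisible by 4, the maximum of per A over A ∈ Λ̂_n(α, γ−α, γ) equals (2(α⁴ + γ⁴))^{n/4}. -/
/-!
The matrix `α • S⁻¹ + β • 1 + γ • S` vanishes outside the diagonal blocks given by the cycles
of `S`, so its permanent is the product over the cycles of the permanents of the circulant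
blocks `α P⁻¹ + β + γ P`, `P` the cyclic shift of length `m`. For `β = γ - α` the column `y` of
such a block is `γ (e_y + e_{y-1}) + α (e_{y+1} - e_y)`. Expanding the permanent multilinearly
in the columns, every mixed choice of summands has a column `α (e_{y+1} - e_y)` next to a column
`γ (e_{y+1} + e_y)`, and all `2 × 2` permanents of these two columns vanish; the two pure
choices contribute `α ^ m + (-α) ^ m` and `2 γ ^ m`.

The fourth power of the block factor is at most `(2 (α⁴ + γ⁴)) ^ m`: for even `m ≥ 4` by the
power mean inequality, with equality at `m = 4`, and for odd `m ≥ 3`, where the factor is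
`2 γ ^ m`, by the hypothesis `α⁴ ≥ (2 ^ (1/3) - 1) γ⁴`. Hence the maximum is attained by a
product of `4`-cycles.
-/

open Matrix

/-- `Λ̂_n(α,β,γ)`: matrices `α·Sᵀ + β·I + γ·S` where `S` is the permutation matrix of a
permutation of `{1,…,n}` all of whose cycles have length at least 3 (note `Sᵀ = S⁻¹`). -/
def LambdaHat (n : ℕ) (α β γ : ℝ) : Set (Matrix (Fin n) (Fin n) ℝ) :=
  {A | ∃ s : Equiv.Perm (Fin n), (∀ x, s x ≠ x ∧ s (s x) ≠ x) ∧
    A = α • ((s⁻¹).permMatrix ℝ) + β • (1 : Matrix (Fin n) (Fin n) ℝ) + γ • (s.permMatrix ℝ)}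

open Equiv Finset MulAction Subgroup Function

namespace Matrix

variable {n R : Type*} [Fintype n] [DecidableEq n] [CommSemiring R]

theorem permanent_submatrix_equiv {m : Type*} [Fintype m] [DecidableEq m] (e : m ≃ n)
    (M : Matrix n n R) : (M.submatrix e e).permanent = M.permanent := by
  simp only [permanent, submatrix_apply]
  rw [← e.permCongr.sum_comp]
  refine sum_congr rfl fun σ _ => ?_
  rw [← e.symm.prod_comp]
  simp [permCongr_apply]

theorem permanent_eq_prod_fiberwise {Q : Type*} [Fintype Q] [DecidableEq Q] (f : n → Q)
    (M : Matrix n n R) (hM : ∀ x y, f x ≠ f y → M x y = 0) :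
    M.permanent = ∏ q, (M.submatrix (Subtype.val : {x // f x = q} → n) Subtype.val).permanent := by
  let glue : (∀ q, Perm {x // f x = q}) → Perm n := DomMulAct.stabilizerEquiv_invFun_aux
  have glue_apply (g : ∀ q, Perm {x // f x = q}) (q : Q) (x : {x // f x = q}) :
      glue g x = g q x := DomMulAct.stabilizerEquiv_invFun_eq g x.2
  simp only [permanent, submatrix_apply, Fintype.prod_sum]
  symm
  refine Fintype.sum_of_injective glue (fun g g' h => ?_) _ _ (fun σ hσ => ?_) (fun g => ?_)
  · ext q x
    simpa [glue_apply] using DFunLike.congr_fun h x.1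
  · by_contra hne
    have hfib (x : n) : f (σ x) = f x := by
      by_contra h
      exact hne (prod_eq_zero (mem_univ x) (hM _ _ h))
    exact hσ ⟨fun q => σ.subtypePerm fun x => by simp [hfib], Equiv.ext fun x => rfl⟩
  · rw [← Fintype.prod_fiberwise f]
    simp only [glue_apply]

theorem permanent_sum {κ : Type*} [Fintype κ] (N : κ → Matrix n n R) :
    (∑ t, N t).permanent = ∑ T : n → κ, (of fun x y => N (T y) x y).permanent := by
  simp only [permanent, sum_apply, of_apply, Fintype.prod_sum]
  exact sum_comm

theorem permanent_eq_zero_of_col_pair {M : Matrix n n R} {j k : n} (hjk : j ≠ k)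
    (h : ∀ x y, x ≠ y → M x j * M y k + M y j * M x k = 0) : M.permanent = 0 := by
  refine sum_involution (fun σ _ => σ * Equiv.swap j k) (fun σ _ => ?_) (fun σ _ _ => ?_)
    (fun _ _ => mem_univ _) (fun σ _ => by simp [mul_assoc])
  · have hrest : ∀ i ∈ ({j, k} : Finset n)ᶜ, M ((σ * Equiv.swap j k) i) i = M (σ i) i := by
      intro i hi
      simp only [mem_compl, mem_insert, mem_singleton, not_or] at hi
      simp [swap_apply_of_ne_of_ne hi.1 hi.2]
    rw [← prod_mul_prod_compl {j, k}, ← prod_mul_prod_compl {j, k} (fun i => M _ i),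
      prod_congr rfl hrest, prod_pair hjk, prod_pair hjk, ← add_mul]
    simp only [Perm.mul_apply, swap_apply_left, swap_apply_right]
    rw [h _ _ (σ.injective.ne hjk), zero_mul]
  · exact fun hσ => hjk (by simpa using (congrArg (· j) hσ).symm)

end Matrix

theorem ZMod.forall_of_add_one {m : ℕ} [NeZero m] {P : ZMod m → Prop} (h : ∀ x, P x → P (x + 1))
    {a : ZMod m} (ha : P a) (b : ZMod m) : P b := by
  have hk (k : ℕ) : P (a + k) := by
    induction k with
    | zero => simpa using ha
    | succ k ih => simpa [add_assoc] using h _ ih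
  simpa using hk (b - a).val

def cycleMatrix {R : Type*} [Add R] [Zero R] (m : ℕ) (a b c : R) : Matrix (ZMod m) (ZMod m) R :=
  of fun x y => (if x = y + 1 then a else 0) + (if x = y then b else 0) +
    (if y = x + 1 then c else 0)

section Cycle

variable {m : ℕ} [NeZero m] [Nontrivial (ZMod m)] {R : Type*} [CommRing R]

theorem permanent_diagonal_add_shift (u v : R) :
    (of fun x y : ZMod m => (if x = y then u else 0) + (if x = y + 1 then v else 0)).permanent =
      u ^ m + v ^ m := by
  have hshift : ∀ σ : Perm (ZMod m), (∀ y, σ y = y ∨ σ y = y + 1) →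
      σ = 1 ∨ σ = Equiv.addRight 1 := by
    intro σ hσ
    by_cases hup : ∃ y, σ y = y + 1
    · obtain ⟨y, hy⟩ := hup
      refine Or.inr (Equiv.ext (ZMod.forall_of_add_one (fun x hx => ?_) hy))
      refine (hσ (x + 1)).resolve_left fun h => ?_
      exact succ_ne_self x (σ.injective (hx.trans h.symm)).symm
    · push Not at hup
      exact Or.inl (Equiv.ext fun y => (hσ y).resolve_right (hup y))
  have hne : (1 : Perm (ZMod m)) ≠ Equiv.addRight 1 := fun h => by
    simpa using congrArg (· 0) h
  rw [permanent, Fintype.sum_eq_add _ _ hne]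
  · simp [ZMod.card]
  · rintro σ ⟨h1, h2⟩
    obtain ⟨y, hy⟩ : ∃ y, σ y ≠ y ∧ σ y ≠ y + 1 := by
      by_contra! H
      rcases hshift σ fun y => or_iff_not_imp_left.2 (H y) with h | h <;> contradiction
    exact prod_eq_zero (mem_univ y) (by simp [hy.1, hy.2])

theorem permanent_cycleMatrix (a c : R) :
    (cycleMatrix m a (c - a) c).permanent = a ^ m + (-a) ^ m + 2 * c ^ m := by
  let N (t : Bool) : Matrix (ZMod m) (ZMod m) R := if t
    then of fun x y => (if x = y then -a else 0) + (if x = y + 1 then a else 0)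
    else of fun x y => (if y = x then c else 0) + (if y = x + 1 then c else 0)
  have hsplit : cycleMatrix m a (c - a) c = ∑ t, N t := by
    ext x y
    simp only [cycleMatrix, N, Fintype.sum_bool, Matrix.add_apply, of_apply, if_true,
      Bool.false_eq_true, if_false, eq_comm (a := y) (b := x)]
    split_ifs <;> ring
  have htrue : (N true).permanent = (-a) ^ m + a ^ m := permanent_diagonal_add_shift _ _
  have hfalse : (N false).permanent = c ^ m + c ^ m := by
    rw [← permanent_transpose]
    exact permanent_diagonal_add_shift _ _
  rw [hsplit, permanent_sum, Fintype.sum_eq_add (fun _ => true) (fun _ => false)]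
  · change (N true).permanent + (N false).permanent = _
    rw [htrue, hfalse]
    ring
  · simp [funext_iff]
  · rintro T ⟨hT, hF⟩
    obtain ⟨y, hy, hy1⟩ : ∃ y, T y = true ∧ T (y + 1) = false := by
      by_contra! H
      obtain ⟨a, ha⟩ : ∃ a, T a = true := by
        by_contra! H'
        exact hF (funext fun y => by simpa using H' y)
      exact hT (funext (ZMod.forall_of_add_one (fun x hx => by simpa using H x hx) ha))
    refine permanent_eq_zero_of_col_pair (j := y) (k := y + 1) (succ_ne_self y).symm
      fun x x' hxx' => ?_
    simp only [of_apply, hy, hy1, N, if_true, Bool.false_eq_true, if_false, add_left_inj,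
      eq_comm (a := y + 1)]
    split_ifs <;> first | ring1 | (exfalso; grind only [succ_ne_self])

end Cycle

section Lambda

variable {ι R : Type*} [DecidableEq ι] [Semiring R]

def lambdaMatrix (s : Perm ι) (a b c : R) : Matrix ι ι R :=
  a • (s⁻¹).permMatrix R + b • 1 + c • s.permMatrix R

theorem lambdaMatrix_apply (s : Perm ι) (a b c : R) (u v : ι) :
    lambdaMatrix s a b c u v =
      (if u = s v then a else 0) + (if u = v then b else 0) + (if v = s u then c else 0) := by
  simp [lambdaMatrix, Perm.permMatrix, PEquiv.toMatrix_apply, one_apply, eq_comm,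
    Equiv.eq_symm_apply]

end Lambda

section CycleParametrization

-- `e` lists the cycles of `s` when `he` below holds: cycle `q` is `i ↦ e.symm ⟨q, i⟩`.
variable {ι Q R : Type*} {m : Q → ℕ} {s : Perm ι} {e : ι ≃ Σ q, ZMod (m q)}

def cycleRotation (e : ι ≃ Σ q, ZMod (m q)) : Perm ι :=
  e.symm.permCongr (sigmaCongrRight fun _ => Equiv.addRight 1)

theorem cycleRotation_apply_symm (e : ι ≃ Σ q, ZMod (m q)) (q : Q) (i : ZMod (m q)) :
    cycleRotation e (e.symm ⟨q, i⟩) = e.symm ⟨q, i + 1⟩ := by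
  simp [cycleRotation, permCongr_apply]

variable [∀ q, NeZero (m q)]

theorem forall_apply_ne_and_ne_iff_three_le (he : ∀ q i, e.symm ⟨q, i + 1⟩ = s (e.symm ⟨q, i⟩)) :
    (∀ x, s x ≠ x ∧ s (s x) ≠ x) ↔ ∀ q, 3 ≤ m q := by
  rw [← e.symm.forall_congr_right, Sigma.forall]
  refine forall_congr' fun q => ?_
  have h1 := ZMod.natCast_eq_zero_iff 1 (m q)
  have h2 := ZMod.natCast_eq_zero_iff 2 (m q)
  have hm := NeZero.ne (m q)
  simp only [← he, ne_eq, e.symm.apply_eq_iff_eq, Sigma.mk.injEq, heq_eq_eq, true_and,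
    add_assoc, add_eq_left, one_add_one_eq_two, forall_const]
  push_cast at h1 h2
  rw [h1, h2, Nat.dvd_one, Nat.dvd_prime Nat.prime_two]
  omega

variable [Fintype ι] [DecidableEq ι] [Fintype Q] [DecidableEq Q]

theorem permanent_lambdaMatrix_of_cycles [CommSemiring R]
    (he : ∀ q i, e.symm ⟨q, i + 1⟩ = s (e.symm ⟨q, i⟩)) (a b c : R) :
    (lambdaMatrix s a b c).permanent = ∏ q, (cycleMatrix (m q) a b c).permanent := by
  have hs (x : ι) : e (s x) = ⟨(e x).1, (e x).2 + 1⟩ := by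
    rw [← e.eq_symm_apply, he, Sigma.eta, e.symm_apply_apply]
  rw [permanent_eq_prod_fiberwise (fun x => (e x).1)]
  · refine prod_congr rfl fun q _ => ?_
    let φ : ZMod (m q) ≃ {x // (e x).1 = q} :=
      (Equiv.sigmaSubtype q).symm.trans (e.symm.subtypeEquiv fun p => by simp)
    have hφ (i : ZMod (m q)) : (φ i : ι) = e.symm ⟨q, i⟩ := rfl
    rw [← permanent_submatrix_equiv φ]
    congr 1
    ext i j
    simp [hφ, lambdaMatrix_apply, cycleMatrix, ← he]
  · intro u v huv
    have h1 : u ≠ s v := fun h => huv (by simp [h, hs])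
    have h2 : u ≠ v := fun h => huv (by rw [h])
    have h3 : v ≠ s u := fun h => huv (by simp [h, hs])
    simp [lambdaMatrix_apply, h1, h2, h3]

end CycleParametrization

noncomputable def cycleEquiv {ι : Type*} (s : Perm ι) :
    ι ≃ Σ q : orbitRel.Quotient (zpowers s) ι, ZMod (minimalPeriod (s • ·) q.out) :=
  (selfEquivSigmaOrbits (zpowers s) ι).trans (sigmaCongrRight fun q => orbitZPowersEquiv s q.out)

theorem cycleEquiv_symm_add_one {ι : Type*} (s : Perm ι) (q : orbitRel.Quotient (zpowers s) ι)
    (i : ZMod (minimalPeriod (s • ·) q.out)) :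
    (cycleEquiv s).symm ⟨q, i + 1⟩ = s ((cycleEquiv s).symm ⟨q, i⟩) := by
  have key (k : ℤ) : (cycleEquiv s).symm ⟨q, k⟩ = (s ^ k) q.out :=
    congrArg Subtype.val (orbitZPowersEquiv_symm_apply' s q.out k)
  obtain ⟨k, rfl⟩ := ZMod.intCast_surjective i
  rw [← Int.cast_one, ← Int.cast_add, key, key, add_comm, _root_.zpow_one_add, Perm.mul_apply]

def finMulEquivSigmaZMod (m k : ℕ) [NeZero m] : Fin (m * k) ≃ Σ _ : Fin k, ZMod m :=
  finProdFinEquiv.symm.trans <| (Equiv.prodComm _ _).trans <|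
    (Equiv.prodCongr (Equiv.refl _) (ZMod.finEquiv m).toEquiv).trans (Equiv.sigmaEquivProd _ _).symm

def uniformCycles (m k : ℕ) [NeZero m] : Perm (Fin (m * k)) :=
  cycleRotation (finMulEquivSigmaZMod m k)

theorem uniformCycles_apply_ne {m : ℕ} [NeZero m] (hm : 3 ≤ m) (k : ℕ) (x : Fin (m * k)) :
    uniformCycles m k x ≠ x ∧ uniformCycles m k (uniformCycles m k x) ≠ x :=
  (forall_apply_ne_and_ne_iff_three_le fun q i => (cycleRotation_apply_symm _ q i).symm).2 (fun _ => hm) x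

theorem permanent_lambdaMatrix_uniformCycles {R : Type*} [CommSemiring R] (m k : ℕ) [NeZero m]
    (a b c : R) :
    (lambdaMatrix (uniformCycles m k) a b c).permanent = (cycleMatrix m a b c).permanent ^ k := by
  rw [uniformCycles,
    permanent_lambdaMatrix_of_cycles fun q i => (cycleRotation_apply_symm _ q i).symm,
    prod_const, card_univ, Fintype.card_fin]

theorem pow_add_pow_pow_le {x y : ℝ} (hx : 0 ≤ x) (hy : 0 ≤ y) {p q : ℕ} (hp : 0 < p)
    (hpq : p ≤ q) : (x ^ q + y ^ q) ^ p ≤ (x ^ p + y ^ p) ^ q := by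
  have hp0 : (0 : ℝ) < p := by exact_mod_cast hp
  have hpow (z : ℝ) (hz : 0 ≤ z) : (z ^ p) ^ ((q : ℝ) / p) = z ^ q := by
    rw [← Real.rpow_natCast, ← Real.rpow_mul hz, mul_div_cancel₀ _ hp0.ne', Real.rpow_natCast]
  have key := Real.add_rpow_le_rpow_add (pow_nonneg hx p) (pow_nonneg hy p)
    ((one_le_div hp0).2 (by exact_mod_cast hpq) : (1 : ℝ) ≤ q / p)
  rw [hpow x hx, hpow y hy] at key
  calc (x ^ q + y ^ q) ^ p ≤ ((x ^ p + y ^ p) ^ ((q : ℝ) / p)) ^ p := by gcongr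
    _ = (x ^ p + y ^ p) ^ q := by
      rw [← Real.rpow_natCast _ p, ← Real.rpow_mul (by positivity), div_mul_cancel₀ _ hp0.ne',
        Real.rpow_natCast]

section CycleBounds

variable {m : ℕ} [NeZero m]

theorem permanent_cycleMatrix_nonneg [Nontrivial (ZMod m)] (a : ℝ) {c : ℝ} (hc : 0 ≤ c) :
    0 ≤ (cycleMatrix m a (c - a) c).permanent := by
  rw [permanent_cycleMatrix]
  rcases m.even_or_odd with hm | hm
  · rw [hm.neg_pow]
    have := hm.pow_nonneg a
    positivity
  · rw [hm.neg_pow, add_neg_cancel, zero_add]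
    positivity

theorem permanent_cycleMatrix_pow_four_le (hm : 3 ≤ m) {a c : ℝ} (hc : 0 ≤ c)
    (h : (2 ^ (1 / 3 : ℝ) - 1) * c ^ 4 ≤ a ^ 4) :
    (cycleMatrix m a (c - a) c).permanent ^ 4 ≤ (2 * (a ^ 4 + c ^ 4)) ^ m := by
  have : Nontrivial (ZMod m) := ZMod.nontrivial_iff.2 (by omega)
  rw [permanent_cycleMatrix]
  rcases m.even_or_odd with hm2 | hm2
  · have hm4 : 4 ≤ m := by obtain ⟨k, rfl⟩ := hm2; omega
    rw [hm2.neg_pow, ← hm2.pow_abs, ← (show Even 4 by decide).pow_abs a]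
    calc (|a| ^ m + |a| ^ m + 2 * c ^ m) ^ 4 = 2 ^ 4 * (|a| ^ m + c ^ m) ^ 4 := by ring
      _ ≤ 2 ^ m * (|a| ^ 4 + c ^ 4) ^ m := by
        gcongr
        · exact one_le_two
        · exact pow_add_pow_pow_le (abs_nonneg a) hc (by norm_num) hm4
      _ = (2 * (|a| ^ 4 + c ^ 4)) ^ m := (mul_pow _ _ _).symm
  · set t : ℝ := 2 ^ (1 / 3 : ℝ)
    have ht : t ^ 3 = 2 := by
      rw [← Real.rpow_natCast, ← Real.rpow_mul zero_le_two]; norm_num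
    have ht1 : 1 ≤ t := Real.one_le_rpow one_le_two (by norm_num)
    rw [hm2.neg_pow]
    -- `(2 t) ^ 3 = 16` is where the constant `2 ^ (1/3)` comes from
    calc (a ^ m + -a ^ m + 2 * c ^ m) ^ 4 = (2 * t) ^ 3 * (c ^ 4) ^ m := by
          rw [mul_pow, ht]; ring
      _ ≤ (2 * t) ^ m * (c ^ 4) ^ m := by gcongr; linarith
      _ = (2 * (t * c ^ 4)) ^ m := by rw [← mul_pow, mul_assoc]
      _ ≤ (2 * (a ^ 4 + c ^ 4)) ^ m := by gcongr; linarith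

end CycleBounds

theorem permanent_lambdaMatrix_pow_four_le {ι : Type*} [Fintype ι] [DecidableEq ι] {s : Perm ι}
    (hs : ∀ x, s x ≠ x ∧ s (s x) ≠ x) {a c : ℝ} (hc : 0 ≤ c)
    (h : (2 ^ (1 / 3 : ℝ) - 1) * c ^ 4 ≤ a ^ 4) :
    (lambdaMatrix s a (c - a) c).permanent ^ 4 ≤ (2 * (a ^ 4 + c ^ 4)) ^ Fintype.card ι := by
  classical
  let := Fintype.ofFinite (orbitRel.Quotient (zpowers s) ι)
  have he := cycleEquiv_symm_add_one s
  have hm := (forall_apply_ne_and_ne_iff_three_le he).1 hs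
  rw [permanent_lambdaMatrix_of_cycles he, ← prod_pow, Fintype.card_congr (cycleEquiv s),
    Fintype.card_sigma, ← prod_pow_eq_pow_sum]
  refine prod_le_prod (fun q _ => ?_) fun q _ => ?_
  · have : Nontrivial (ZMod (minimalPeriod (s • ·) q.out)) :=
      ZMod.nontrivial_iff.2 (by have := hm q; omega)
    exact pow_nonneg (permanent_cycleMatrix_nonneg a hc) 4
  · rw [ZMod.card]
    exact permanent_cycleMatrix_pow_four_le (hm q) hc h

theorem stmt_9_general (α γ : ℝ) (h1 : 0 ≤ γ)
    (h2 : ((2 : ℝ) ^ ((1 : ℝ) / 3) - 1) ^ ((1 : ℝ) / 4) * γ ≤ α)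
    (n : ℕ) (hn4 : 4 ∣ n) :
    IsGreatest {x : ℝ | ∃ A ∈ LambdaHat n α (γ - α) γ, A.permanent = x}
      ((2 * (α ^ 4 + γ ^ 4)) ^ (n / 4)) := by
  have hαγ : (2 ^ (1 / 3 : ℝ) - 1) * γ ^ 4 ≤ α ^ 4 := by
    have ht : (0 : ℝ) ≤ 2 ^ (1 / 3 : ℝ) - 1 := by
      linarith [Real.one_le_rpow one_le_two (by norm_num : (0 : ℝ) ≤ 1 / 3)]
    have := pow_le_pow_left₀ (by positivity) h2 4
    rwa [mul_pow, ← Real.rpow_natCast, ← Real.rpow_mul ht,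
      show (1 / 4 : ℝ) * (4 : ℕ) = 1 by norm_num, Real.rpow_one] at this
  obtain ⟨k, rfl⟩ := hn4
  rw [Nat.mul_div_cancel_left k four_pos]
  refine ⟨⟨_, ⟨uniformCycles 4 k, uniformCycles_apply_ne (by norm_num) k, rfl⟩, ?_⟩, ?_⟩
  · have : Nontrivial (ZMod 4) := ZMod.nontrivial_iff.2 (by norm_num)
    change (lambdaMatrix _ α (γ - α) γ).permanent = _
    rw [permanent_lambdaMatrix_uniformCycles, permanent_cycleMatrix]
    ring
  · rintro _ ⟨_, ⟨s, hs, rfl⟩, rfl⟩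
    refine le_of_pow_le_pow_left₀ four_ne_zero (by positivity) ?_
    calc (lambdaMatrix s α (γ - α) γ).permanent ^ 4
        ≤ (2 * (α ^ 4 + γ ^ 4)) ^ Fintype.card (Fin (4 * k)) :=
          permanent_lambdaMatrix_pow_four_le hs h1 hαγ
      _ = ((2 * (α ^ 4 + γ ^ 4)) ^ k) ^ 4 := by rw [Fintype.card_fin, ← pow_mul, mul_comm k]

theorem stmt_9 (α γ : ℝ) (h1 : 0 ≤ γ)
    (h2 : ((2 : ℝ) ^ ((1 : ℝ) / 3) - 1) ^ ((1 : ℝ) / 4) * γ ≤ α)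
    (n : ℕ) (hn : 4 ≤ n) (hn4 : 4 ∣ n) :
    IsGreatest {x : ℝ | ∃ A ∈ LambdaHat n α (γ - α) γ, A.permanent = x}
      ((2 * (α ^ 4 + γ ^ 4)) ^ (n / 4)) :=
  stmt_9_general α γ h1 h2 n hn4
end

section
/- For every integer n ≥ 3, the number of distinct values taken by the permanent on the set Δ_n^3 of circulants in Λ_n^3 is at most ⌊(n² + 3)/12⌋. -/
/-!
Left multiplication by `P^t` permutes rows and transposition sends `P^k` to `P^(n-k)`; both
preserve the permanent. Hence `per (P^i + P^j + P^k)` depends only on the cyclic gaps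
`(j - i, k - j, n - k + i)` up to rotation and reversal, that is, on the partition of `n` into
three positive parts that they form. There are `⌊(n² + 3)/12⌋` such partitions.
-/

open Matrix

/-- `P_n`: the permutation matrix of the cycle `(1 2 … n)`, with 1's exactly in positions
`(1,2), (2,3), …, (n−1,n), (n,1)`. -/
def cycMatrix (n : ℕ) : Matrix (Fin n) (Fin n) ℤ := (finRotate n).permMatrix ℤ

open Finset Equiv

theorem finRotate_pow_self (n : ℕ) : finRotate n ^ n = 1 := by
  rcases lt_or_ge n 2 with h | h
  · interval_cases n <;> decide
  · rw [← orderOf_dvd_iff_pow_eq_one, ← Perm.lcm_cycleType, cycleType_finRotate_of_le h]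
    simp

section Permanent

variable {ι R : Type*} [Fintype ι] [DecidableEq ι]

theorem Matrix.permMatrix_pow [Semiring R] (σ : Perm ι) (k : ℕ) :
    (σ ^ k).permMatrix R = σ.permMatrix R ^ k := by
  induction k with
  | zero => simp
  | succ k ih => rw [pow_succ, permMatrix_mul, ih, pow_succ']

theorem Matrix.permanent_permMatrix_mul [CommSemiring R] (σ : Perm ι) (M : Matrix ι ι R) :
    (σ.permMatrix R * M).permanent = M.permanent := by
  rw [PEquiv.toMatrix_toPEquiv_mul, permanent_permute_cols]

end Permanent

theorem cycMatrix_pow_self (n : ℕ) : cycMatrix n ^ n = 1 := by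
  rw [cycMatrix, ← permMatrix_pow, finRotate_pow_self, permMatrix_one]

theorem permanent_cycMatrix_pow_mul {n : ℕ} (k : ℕ) (M : Matrix (Fin n) (Fin n) ℤ) :
    (cycMatrix n ^ k * M).permanent = M.permanent := by
  rw [cycMatrix, ← permMatrix_pow, permanent_permMatrix_mul]

theorem transpose_cycMatrix_pow {n k : ℕ} (hk : k ≤ n) :
    (cycMatrix n ^ k)ᵀ = cycMatrix n ^ (n - k) := by
  have hinv : (finRotate n ^ k)⁻¹ = finRotate n ^ (n - k) := by
    rw [inv_eq_iff_mul_eq_one, ← pow_add, Nat.add_sub_cancel' hk, finRotate_pow_self]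
  rw [cycMatrix, ← permMatrix_pow, ← permMatrix_pow, transpose_permMatrix, hinv]

/-- Indexed by the cyclic gaps `(a, b, n - a - b)` of the circulant. -/
def gapPermanent (n a b : ℕ) : ℤ := (1 + cycMatrix n ^ a + cycMatrix n ^ (a + b)).permanent

theorem permanent_cycMatrix_pow_add_pow_add_pow {n i j k : ℕ} (hij : i ≤ j) (hjk : j ≤ k) :
    (cycMatrix n ^ i + cycMatrix n ^ j + cycMatrix n ^ k).permanent =
      gapPermanent n (j - i) (k - j) := by
  have shift : cycMatrix n ^ i * (1 + cycMatrix n ^ (j - i) + cycMatrix n ^ (j - i + (k - j)))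
      = cycMatrix n ^ i + cycMatrix n ^ j + cycMatrix n ^ k := by
    rw [mul_add, mul_add, mul_one, ← pow_add, ← pow_add, show i + (j - i) = j by omega,
      show i + (j - i + (k - j)) = k by omega]
  rw [← shift, permanent_cycMatrix_pow_mul, gapPermanent]

theorem gapPermanent_rotate {n a b c : ℕ} (h : a + b + c = n) :
    gapPermanent n a b = gapPermanent n b c := by
  have e1 : cycMatrix n ^ (b + c) * cycMatrix n ^ a = 1 := by
    rw [← pow_add, show b + c + a = n by omega, cycMatrix_pow_self]
  have e2 : cycMatrix n ^ (b + c) * cycMatrix n ^ (a + b) = cycMatrix n ^ b := by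
    rw [← pow_add, show b + c + (a + b) = n + b by omega, pow_add, cycMatrix_pow_self, one_mul]
  have shift : cycMatrix n ^ (b + c) * (1 + cycMatrix n ^ a + cycMatrix n ^ (a + b))
      = 1 + cycMatrix n ^ b + cycMatrix n ^ (b + c) := by
    rw [mul_add, mul_add, mul_one, e1, e2]
    abel
  rw [gapPermanent, gapPermanent, ← shift, permanent_cycMatrix_pow_mul]

theorem gapPermanent_reflect {n a b c : ℕ} (h : a + b + c = n) :
    gapPermanent n a b = gapPermanent n c b := by
  have reflect : (1 + cycMatrix n ^ a + cycMatrix n ^ (a + b))ᵀ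
      = 1 + cycMatrix n ^ (c + b) + cycMatrix n ^ c := by
    rw [transpose_add, transpose_add, transpose_one, transpose_cycMatrix_pow (by omega),
      transpose_cycMatrix_pow (by omega), show n - a = c + b by omega,
      show n - (a + b) = c by omega, add_right_comm]
  rw [gapPermanent, gapPermanent, ← permanent_transpose, reflect, add_right_comm]

/-- `(p, q)` encodes the partition `n = p + q + r` into positive parts `p ≤ q ≤ r`. -/
def sortedGapPairs (n : ℕ) : Finset (ℕ × ℕ) :=
  (range (n + 1) ×ˢ range (n + 1)).filter (fun p => 1 ≤ p.1 ∧ p.1 ≤ p.2 ∧ p.1 + 2 * p.2 ≤ n)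

@[simp]
theorem mem_sortedGapPairs {n : ℕ} {p : ℕ × ℕ} :
    p ∈ sortedGapPairs n ↔ 1 ≤ p.1 ∧ p.1 ≤ p.2 ∧ p.1 + 2 * p.2 ≤ n := by
  simp only [sortedGapPairs, mem_filter, mem_product, mem_range]
  omega

theorem exists_mem_sortedGapPairs_gapPermanent_eq {n a b c : ℕ} (ha : 1 ≤ a) (hb : 1 ≤ b)
    (hc : 1 ≤ c) (h : a + b + c = n) :
    ∃ p ∈ sortedGapPairs n, gapPermanent n a b = gapPermanent n p.1 p.2 := by
  have hbc : gapPermanent n a b = gapPermanent n b c := gapPermanent_rotate h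
  have hca : gapPermanent n a b = gapPermanent n c a := hbc.trans (gapPermanent_rotate (by omega))
  have hcb : gapPermanent n a b = gapPermanent n c b := gapPermanent_reflect h
  have hac : gapPermanent n a b = gapPermanent n a c :=
    hbc.trans (gapPermanent_reflect (by omega))
  have hba : gapPermanent n a b = gapPermanent n b a :=
    hca.trans (gapPermanent_reflect (by omega))
  rcases le_total a b with h1 | h1 <;> rcases le_total b c with h2 | h2 <;>
    rcases le_total a c with h3 | h3
  · exact ⟨(a, b), mem_sortedGapPairs.2 ⟨ha, h1, by omega⟩, rfl⟩
  · exact ⟨(a, b), mem_sortedGapPairs.2 ⟨ha, h1, by omega⟩, rfl⟩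
  · exact ⟨(a, c), mem_sortedGapPairs.2 ⟨ha, h3, by omega⟩, hac⟩
  · exact ⟨(c, a), mem_sortedGapPairs.2 ⟨hc, h3, by omega⟩, hca⟩
  · exact ⟨(b, a), mem_sortedGapPairs.2 ⟨hb, h1, by omega⟩, hba⟩
  · exact ⟨(b, c), mem_sortedGapPairs.2 ⟨hb, h2, by omega⟩, hbc⟩
  · exact ⟨(c, b), mem_sortedGapPairs.2 ⟨hc, h2, by omega⟩, hcb⟩
  · exact ⟨(c, b), mem_sortedGapPairs.2 ⟨hc, h2, by omega⟩, hcb⟩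

theorem card_sortedGapPairs_succ (m : ℕ) :
    #(sortedGapPairs (m + 1)) = #(sortedGapPairs m) + (m / 2 + 1 - (m + 3) / 3) := by
  set slice := (range (m + 2) ×ˢ range (m + 2)).filter
    (fun p => 1 ≤ p.1 ∧ p.1 ≤ p.2 ∧ p.1 + 2 * p.2 = m + 1)
  have hsplit : sortedGapPairs (m + 1) = sortedGapPairs m ∪ slice := by
    ext p
    simp only [mem_sortedGapPairs, slice, mem_union, mem_filter, mem_product, mem_range]
    omega
  have hdisj : Disjoint (sortedGapPairs m) slice := by
    rw [disjoint_left]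
    intro p hp hq
    simp only [mem_sortedGapPairs, slice, mem_filter, mem_product, mem_range] at hp hq
    omega
  have hslice : #slice = #(Icc ((m + 3) / 3) (m / 2)) := by
    apply card_bij (fun p _ => p.2)
    · intro p hp
      simp only [slice, mem_filter, mem_product, mem_range, mem_Icc] at hp ⊢
      omega
    · intro p hp q hq hpq
      simp only [slice, mem_filter, mem_product, mem_range] at hp hq
      exact Prod.ext (by omega) hpq
    · intro q hq
      simp only [mem_Icc] at hq
      refine ⟨(m + 1 - 2 * q, q), ?_, rfl⟩
      simp only [slice, mem_filter, mem_product, mem_range]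
      omega
  rw [hsplit, card_union_of_disjoint hdisj, hslice, Nat.card_Icc]

theorem succ_sq_add_three_div_twelve (k : ℕ) :
    ((k + 1) ^ 2 + 3) / 12 = (k ^ 2 + 3) / 12 + (k / 2 + 1 - (k + 3) / 3) := by
  obtain ⟨q, r, hr, rfl⟩ : ∃ q r, r < 6 ∧ k = 6 * q + r :=
    ⟨k / 6, k % 6, Nat.mod_lt _ (by norm_num), by omega⟩
  -- `omega` cannot handle `q * q`, so the quadratic part is abstracted as `X`.
  obtain ⟨X, hX⟩ : ∃ X, 3 * (q * q) + q * r = X := ⟨_, rfl⟩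
  have h1 : (6 * q + r) ^ 2 = 12 * X + r ^ 2 := by rw [← hX]; ring
  have h2 : (6 * q + r + 1) ^ 2 = 12 * X + 12 * q + (r ^ 2 + 2 * r + 1) := by rw [← hX]; ring
  rw [h1, h2]
  interval_cases r <;> omega

theorem card_sortedGapPairs (n : ℕ) : #(sortedGapPairs n) = (n ^ 2 + 3) / 12 := by
  induction n with
  | zero => rfl
  | succ n ih => rw [card_sortedGapPairs_succ, ih, succ_sq_add_three_div_twelve]

theorem stmt_10_general (n : ℕ) :
    Set.ncard {x : ℤ | ∃ i j k : ℕ, i < j ∧ j < k ∧ k ≤ n - 1 ∧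
        (cycMatrix n ^ i + cycMatrix n ^ j + cycMatrix n ^ k).permanent = x} ≤
      (n ^ 2 + 3) / 12 := by
  have hsub : {x : ℤ | ∃ i j k : ℕ, i < j ∧ j < k ∧ k ≤ n - 1 ∧
        (cycMatrix n ^ i + cycMatrix n ^ j + cycMatrix n ^ k).permanent = x}
      ⊆ ↑((sortedGapPairs n).image fun p => gapPermanent n p.1 p.2) := by
    rintro x ⟨i, j, k, hij, hjk, hk, rfl⟩
    obtain ⟨p, hp, hval⟩ := exists_mem_sortedGapPairs_gapPermanent_eq (n := n) (a := j - i)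
      (b := k - j) (c := n - k + i) (by omega) (by omega) (by omega) (by omega)
    refine mem_coe.2 (mem_image.2 ⟨p, hp, ?_⟩)
    exact ((permanent_cycMatrix_pow_add_pow_add_pow hij.le hjk.le).trans hval).symm
  calc _ ≤ #((sortedGapPairs n).image fun p => gapPermanent n p.1 p.2) :=
        (Set.ncard_le_ncard hsub).trans_eq (Set.ncard_coe_finset _)
    _ ≤ #(sortedGapPairs n) := card_image_le
    _ = (n ^ 2 + 3) / 12 := card_sortedGapPairs n

theorem stmt_10 (n : ℕ) (hn : 3 ≤ n) :
    Set.ncard {x : ℤ | ∃ i j k : ℕ, i < j ∧ j < k ∧ k ≤ n - 1 ∧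
        (cycMatrix n ^ i + cycMatrix n ^ j + cycMatrix n ^ k).permanent = x} ≤
      (n ^ 2 + 3) / 12 :=
  stmt_10_general n
end

section
/- For all integers n₁, n₂ ≥ 3, the sequence a satisfies a(n₁ + n₂) ≤ a(n₁)·a(n₂). -/
private def Lu : ℕ → ℤ
  | 0 => 2
  | 1 => 1
  | (n+2) => Lu n + Lu (n+1)

private lemma Lu_rec (n : ℕ) : Lu (n+2) = Lu n + Lu (n+1) := rfl

private lemma Lu_pos : ∀ n, 1 ≤ Lu n ∧ 1 ≤ Lu (n+1) := by
  intro n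
  induction n with
  | zero => exact ⟨by norm_num [Lu], by norm_num [Lu]⟩
  | succ k ih => exact ⟨ih.2, by rw [Lu_rec]; linarith [ih.1, ih.2]⟩

private lemma Lu_mono : ∀ j k : ℕ, 1 ≤ j → j ≤ k → Lu j ≤ Lu k := by
  intro j k hj hjk
  induction k with
  | zero => omega
  | succ n ih =>
    rcases Nat.lt_or_ge j (n+1) with h | h
    · have hn : 1 ≤ n := by omega
      have : Lu j ≤ Lu n := ih (by omega)
      have h2 : Lu n ≤ Lu (n+1) := by
        rcases n with _ | m
        · omega
        · rw [Lu_rec]; linarith [(Lu_pos m).1, (Lu_pos m).2]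
      linarith
    · have : j = n + 1 := by omega
      simp [this]

private lemma Lu_le_of_le {k m : ℕ} (hk : k ≤ m) (hm : 3 ≤ m) : Lu k ≤ Lu m := by
  rcases Nat.eq_zero_or_pos k with h | h
  · subst h
    have : Lu 3 ≤ Lu m := Lu_mono 3 m (by norm_num) hm
    have h3 : Lu 3 = 4 := by norm_num [Lu_rec, Lu]
    norm_num [Lu]
    linarith
  · exact Lu_mono k m h hk

private lemma Lu_prod (m : ℕ) : ∀ n, n ≤ m →
    Lu m * Lu n - Lu (m + n) = (-1 : ℤ)^n * Lu (m - n) := by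
  have key : ∀ n, (n ≤ m → Lu m * Lu n - Lu (m + n) = (-1 : ℤ)^n * Lu (m - n)) ∧
      (n + 1 ≤ m → Lu m * Lu (n+1) - Lu (m + (n+1)) = (-1 : ℤ)^(n+1) * Lu (m - (n+1))) := by
    intro n
    induction n with
    | zero =>
      constructor
      · intro _
        simp [Lu]
        ring
      · intro h1
        -- Lu m * Lu 1 - Lu (m+1) = -Lu (m-1)
        obtain ⟨d, rfl⟩ : ∃ d, m = d + 1 := ⟨m - 1, by omega⟩
        simp only [Nat.add_sub_cancel, show d + 1 + 1 = d + 2 from rfl, Lu_rec]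
        simp [Lu]
    | succ k ih =>
      refine ⟨ih.2, ?_⟩
      intro h2
      have hd : ∃ d, m - (k + 2) = d ∧ m - (k+1) = d + 1 ∧ m - k = d + 2 := ⟨m - (k+2), by omega⟩
      obtain ⟨d, hd0, hd1, hd2⟩ := hd
      have e0 := ih.1 (by omega)
      have e1 := ih.2 (by omega)
      rw [hd1] at e1; rw [hd2] at e0; rw [hd0]
      have hrec : Lu (m + (k+2)) = Lu (m + k) + Lu (m + (k+1)) := by
        rw [show m + (k+2) = (m+k) + 2 from by ring]
        rw [Lu_rec]
        ring_nf
      have hLn : Lu (k+2) = Lu k + Lu (k+1) := Lu_rec k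
      have hLd : Lu (d+2) = Lu d + Lu (d+1) := Lu_rec d
      have hpow : ((-1:ℤ))^(k+2) = (-1:ℤ)^k := by ring
      rw [hrec, hLn, hpow]
      have hpow1 : ((-1:ℤ))^(k+1) = -((-1:ℤ)^k) := by ring
      rw [hpow1] at e1
      linear_combination e0 + e1 + (-1:ℤ)^k * hLd
  intro n hn
  exact (key n).1 hn

theorem stmt_11 (a : ℕ → ℤ)
    (ha3 : a 3 = 6) (ha4 : a 4 = 9)
    (ha : ∀ m : ℕ, 5 ≤ m → a m = a (m - 1) + a (m - 2) - 2) :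
    ∀ n₁ n₂ : ℕ, 3 ≤ n₁ → 3 ≤ n₂ → a (n₁ + n₂) ≤ a n₁ * a n₂ := by
  have ha_eq : ∀ k, (3 ≤ k → a k = Lu k + 2) ∧ (3 ≤ k + 1 → a (k+1) = Lu (k+1) + 2) := by
    intro k
    induction k with
    | zero => exact ⟨by omega, by omega⟩
    | succ j ih =>
      refine ⟨ih.2, ?_⟩
      intro hj
      rcases Nat.lt_or_ge (j+2) 5 with h | h
      · have hj1 : 1 ≤ j := by omega
        have hj2 : j ≤ 2 := by omega
        interval_cases j
        · rw [ha3]; norm_num [Lu_rec, Lu]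
        · rw [ha4]; norm_num [Lu_rec, Lu]
      · have h1 := ih.1 (by omega)
        have h2 := ih.2 (by omega)
        have := ha (j+2) h
        simp only [show j + 2 - 1 = j + 1 from rfl, show j + 2 - 2 = j from rfl] at this
        rw [this, h1, h2, show j + 1 + 1 = j + 2 from rfl, Lu_rec]
        ring
  have main : ∀ m n : ℕ, 3 ≤ n → n ≤ m → a (m + n) ≤ a m * a n := by
    intro m n hn hnm
    have hm : 3 ≤ m := le_trans hn hnm
    have ham : a m = Lu m + 2 := (ha_eq m).1 hm
    have han : a n = Lu n + 2 := (ha_eq n).1 hn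
    have hamn : a (m + n) = Lu (m + n) + 2 := (ha_eq (m+n)).1 (by omega)
    have hprod := Lu_prod m n hnm
    have hLd : Lu (m - n) ≤ Lu m := Lu_le_of_le (by omega) hm
    have hLd0 : (1:ℤ) ≤ Lu (m - n) := (Lu_pos (m-n)).1
    have hLm : (1:ℤ) ≤ Lu m := (Lu_pos m).1
    have hLn : (1:ℤ) ≤ Lu n := (Lu_pos n).1
    have hsign : (-1:ℤ)^n = 1 ∨ (-1:ℤ)^n = -1 := neg_one_pow_eq_or ℤ n
    rw [ham, han, hamn]
    rcases hsign with h | h <;> rw [h] at hprod <;> nlinarith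
  intro n₁ n₂ h1 h2
  rcases le_total n₂ n₁ with h | h
  · exact main n₁ n₂ h2 h
  · rw [Nat.add_comm, mul_comm]
    exact main n₂ n₁ h1 h
end

section
/- For every integer n ≥ 3, the set of values of the permanent on Λ_n^3 equals the set of values of the permanent on Λ̄_n^3, i.e., {per A : A ∈ Λ_n^3} = {per A : A ∈ Λ̄_n^3}. -/
open Matrix

/-- `Λ_n^3`: (0,1)-matrices with exactly three 1's in every row and every column. -/
def Lambda3 (n : ℕ) : Set (Matrix (Fin n) (Fin n) ℤ) :=
  {A | (∀ i j, A i j = 0 ∨ A i j = 1) ∧ (∀ i, ∑ j, A i j = 3) ∧ (∀ j, ∑ i, A i j = 3)}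

/-- `Λ̄_n^3`: matrices of `Λ_n^3` with 1's on the main diagonal. -/
def LambdaBar3 (n : ℕ) : Set (Matrix (Fin n) (Fin n) ℤ) :=
  {A | A ∈ Lambda3 n ∧ ∀ i, A i i = 1}

/-- Every matrix in `Λ_n^3` has a permutation in its support (Hall's theorem). -/
lemma exists_perm_of_Lambda3 {n : ℕ} {A : Matrix (Fin n) (Fin n) ℤ}
    (hA : A ∈ Lambda3 n) : ∃ σ : Equiv.Perm (Fin n), ∀ i, A i (σ i) = 1 := by
  obtain ⟨h01, hrow, hcol⟩ := hA
  classical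
  set t : Fin n → Finset (Fin n) := fun i => Finset.univ.filter (fun j => A i j = 1) with ht
  have hsum_eq_card : ∀ (s : Finset (Fin n)) (i : Fin n),
      ∑ j ∈ s, A i j = ((s.filter (fun j => A i j = 1)).card : ℤ) := by
    intro s i
    rw [← Finset.sum_filter_add_sum_filter_not s (fun j => A i j = 1)]
    have h1 : ∑ j ∈ s.filter (fun j => A i j = 1), A i j
        = ((s.filter (fun j => A i j = 1)).card : ℤ) := by
      rw [Finset.sum_congr rfl (fun j hj => (Finset.mem_filter.mp hj).2)]
      simp
    have h2 : ∑ j ∈ s.filter (fun j => ¬ A i j = 1), A i j = 0 := by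
      apply Finset.sum_eq_zero
      intro j hj
      rcases h01 i j with h | h
      · exact h
      · exact absurd h (Finset.mem_filter.mp hj).2
    rw [h1, h2, add_zero]
  have hcard_t : ∀ i, (t i).card = 3 := by
    intro i
    have := hsum_eq_card Finset.univ i
    rw [hrow i] at this
    exact_mod_cast this.symm
  -- Hall condition
  have hall : ∀ s : Finset (Fin n), s.card ≤ (s.biUnion t).card := by
    intro s
    have key : (3 : ℤ) * s.card ≤ 3 * (s.biUnion t).card := by
      have h1 : (3 : ℤ) * s.card = ∑ i ∈ s, ∑ j, A i j := by
        rw [Finset.sum_congr rfl (fun i _ => hrow i)]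
        simp [mul_comm]
      have h2 : ∑ i ∈ s, ∑ j, A i j = ∑ j, ∑ i ∈ s, A i j := Finset.sum_comm
      have h3 : ∑ j, ∑ i ∈ s, A i j = ∑ j ∈ s.biUnion t, ∑ i ∈ s, A i j := by
        symm
        apply Finset.sum_subset (Finset.subset_univ _)
        intro j _ hj
        apply Finset.sum_eq_zero
        intro i hi
        rcases h01 i j with h | h
        · exact h
        · exact absurd (Finset.mem_biUnion.mpr ⟨i, hi, by simp [ht, h]⟩) hj
      have h4 : ∀ j, ∑ i ∈ s, A i j ≤ 3 := by
        intro j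
        calc ∑ i ∈ s, A i j ≤ ∑ i, A i j := by
              apply Finset.sum_le_sum_of_subset_of_nonneg (Finset.subset_univ _)
              intro i _ _
              rcases h01 i j with h | h <;> simp [h]
          _ = 3 := hcol j
      calc (3 : ℤ) * s.card = ∑ j ∈ s.biUnion t, ∑ i ∈ s, A i j := by rw [h1, h2, h3]
        _ ≤ ∑ _j ∈ s.biUnion t, (3 : ℤ) := Finset.sum_le_sum (fun j _ => h4 j)
        _ = 3 * (s.biUnion t).card := by simp [mul_comm]
    have : (s.card : ℤ) ≤ ((s.biUnion t).card : ℤ) := le_of_mul_le_mul_left key (by norm_num)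
    exact_mod_cast this
  obtain ⟨f, hf_inj, hf_mem⟩ := (Finset.all_card_le_biUnion_card_iff_exists_injective t).mp hall
  refine ⟨Equiv.ofBijective f ((Fintype.bijective_iff_injective_and_card f).mpr ⟨hf_inj, rfl⟩),
    fun i => ?_⟩
  have := hf_mem i
  simp only [ht, Finset.mem_filter] at this
  exact this.2

theorem stmt_13 (n : ℕ) (hn : 3 ≤ n) :
    {x : ℤ | ∃ A ∈ Lambda3 n, A.permanent = x} =
      {x : ℤ | ∃ A ∈ LambdaBar3 n, A.permanent = x} := by
  ext x
  simp only [Set.mem_setOf_eq]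
  constructor
  · rintro ⟨A, hA, rfl⟩
    obtain ⟨σ, hσ⟩ := exists_perm_of_Lambda3 hA
    obtain ⟨h01, hrow, hcol⟩ := hA
    refine ⟨A.submatrix (⇑σ.symm) id, ⟨⟨fun i j => h01 _ _, fun i => hrow _, fun j => ?_⟩,
      fun i => ?_⟩, Matrix.permanent_permute_cols σ.symm A⟩
    · calc ∑ i, A.submatrix (⇑σ.symm) id i j = ∑ i, A (σ.symm i) j := rfl
        _ = ∑ i, A i j := Equiv.sum_comp σ.symm (fun i => A i j)
        _ = 3 := hcol j
    · have := hσ (σ.symm i)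
      rwa [Equiv.apply_symm_apply] at this
  · rintro ⟨A, hA, rfl⟩
    exact ⟨A, hA.1, rfl⟩
end

section
/- Let n ≥ 1 and let A be an n×n matrix with integer entries. Then per A ≡ N (mod 2), where N is the number of subsets T ⊆ {1,…,n} with the property that for every row index i, the sum ∑_{j ∉ T} A_{i,j} is odd (i.e., zeroing out the columns with indices in T leaves all n row sums odd). -/
/-!
Ryser's formula `per A = ∑_T (-1)^|T| ∏_i ∑_{j ∉ T} A i j`: expanding the product gives a sum over
all maps `f` of `∏_i A i (f i)`, weighted by `∑_{T ∩ range f = ∅} (-1)^|T|`, which vanishes unless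
`f` is surjective, i.e. a permutation. Modulo 2 the signs disappear, and each product is `1` exactly
when every row sum `∑_{j ∉ T} A i j` is odd.
-/

open Matrix Finset

lemma sum_perm_eq_sum_surjective {α M : Type*} [Fintype α] [DecidableEq α] [AddCommMonoid M]
    (g : (α → α) → M) :
    ∑ σ : Equiv.Perm α, g σ = ∑ f : α → α with Function.Surjective f, g f := by
  refine sum_bij (fun σ _ => ⇑σ) (fun σ _ => by simpa using σ.surjective)
    (fun σ _ τ _ h => Equiv.coe_fn_injective h) (fun f hf => ?_) (fun _ _ => rfl)
  have hf : Function.Surjective f := (mem_filter.mp hf).2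
  exact ⟨Equiv.ofBijective f ⟨Finite.injective_iff_surjective.mpr hf, hf⟩, mem_univ _, rfl⟩

lemma sum_neg_one_pow_card_disjoint_range {α ι R : Type*} [Fintype α] [Fintype ι]
    [DecidableEq ι] [Ring R] (f : α → ι) :
    ∑ T : Finset ι with ∀ a, f a ∉ T, (-1 : R) ^ #T =
      if Function.Surjective f then 1 else 0 := by
  have hfilter : univ.filter (fun T : Finset ι => ∀ a, f a ∉ T) = (univ.image f)ᶜ.powerset := by
    ext T
    rw [mem_filter, mem_powerset, subset_compl_comm, image_subset_iff]
    simp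
  have hsurj : (univ.image f)ᶜ = ∅ ↔ Function.Surjective f := by
    simp [← coe_inj, Set.range_eq_univ]
  have hcast := congrArg (Int.cast : ℤ → R) (sum_powerset_neg_one_pow_card (x := (univ.image f)ᶜ))
  push_cast at hcast
  rw [hfilter, hcast]
  exact if_congr hsurj rfl rfl

theorem Matrix.permanent_eq_sum_neg_one_pow_card_mul_prod_sum_compl {n R : Type*} [Fintype n]
    [DecidableEq n] [CommRing R] (A : Matrix n n R) :
    A.permanent = ∑ T : Finset n, (-1) ^ #T * ∏ i, ∑ j ∈ Tᶜ, A i j := by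
  have hrows (T : Finset n) :
      ∏ i, ∑ j ∈ Tᶜ, A i j = ∑ f : n → n with ∀ i, f i ∉ T, ∏ i, A i (f i) := by
    rw [prod_univ_sum (fun _ => Tᶜ) (fun i j => A i j)]
    congr 1
    ext f
    simp [Fintype.mem_piFinset]
  calc A.permanent = ∑ f : n → n, if Function.Surjective f then ∏ i, A i (f i) else 0 := by
        rw [← permanent_transpose, permanent]
        simp only [transpose_apply]
        rw [sum_perm_eq_sum_surjective (fun f => ∏ i, A i (f i)), sum_filter]
    _ = ∑ f : n → n, ∑ T : Finset n, if ∀ i, f i ∉ T then (-1) ^ #T * ∏ i, A i (f i) else 0 := by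
        refine sum_congr rfl fun f _ => ?_
        rw [← boole_mul, ← sum_neg_one_pow_card_disjoint_range, sum_mul, sum_filter]
    _ = ∑ T : Finset n, (-1) ^ #T * ∏ i, ∑ j ∈ Tᶜ, A i j := by
        rw [sum_comm]
        refine sum_congr rfl fun T _ => ?_
        rw [hrows, mul_sum, sum_filter]

lemma ZMod.intCast_prod_eq_ite_forall_odd {ι : Type*} (s : Finset ι) (x : ι → ℤ) :
    ((∏ i ∈ s, x i : ℤ) : ZMod 2) = if ∀ i ∈ s, Odd (x i) then 1 else 0 := by
  rw [Int.cast_prod, ← prod_boole]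
  refine prod_congr rfl fun i _ => ?_
  split_ifs with h
  · exact ZMod.intCast_eq_one_iff_odd.mpr h
  · exact ZMod.intCast_eq_zero_iff_even.mpr (Int.not_odd_iff_even.mp h)

theorem stmt_15_general (n : ℕ) (A : Matrix (Fin n) (Fin n) ℤ) :
    A.permanent ≡
      ((Finset.univ.filter
          (fun T : Finset (Fin n) => ∀ i, Odd (∑ j ∈ Tᶜ, A i j))).card : ℤ) [ZMOD 2] := by
  refine (ZMod.intCast_eq_intCast_iff _ _ 2).mp ?_
  rw [A.permanent_eq_sum_neg_one_pow_card_mul_prod_sum_compl, Int.cast_sum, Int.cast_natCast, natCast_card_filter]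
  refine sum_congr rfl fun T _ => ?_
  rw [Int.cast_mul, Int.cast_pow, Int.cast_neg, Int.cast_one, ZMod.intCast_prod_eq_ite_forall_odd]
  simp

theorem stmt_15 (n : ℕ) (hn : 1 ≤ n) (A : Matrix (Fin n) (Fin n) ℤ) :
    A.permanent ≡
      ((Finset.univ.filter
          (fun T : Finset (Fin n) => ∀ i, Odd (∑ j ∈ Tᶜ, A i j))).card : ℤ) [ZMOD 2] :=
  stmt_15_general n A
end

section
/- For the parameters (α,β,γ) = (−1,3,2), the sequence a(−1,3,2;n) satisfies a(−1,3,2;n) = 2^{n+1} for every odd n ≥ 3 and a(−1,3,2;n) = 2^{n+1} + 2 for every even n ≥ 4. -/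
theorem stmt_16 (a : ℕ → ℝ)
    (ha3 : a 3 = (-1 : ℝ) ^ 3 + 3 ^ 3 + 2 ^ 3 + 3 * (-1) * 3 * 2)
    (ha4 : a 4 = (-1 : ℝ) ^ 4 + 3 ^ 4 + 2 ^ 4 + 4 * (-1) * 3 ^ 2 * 2 + 2 * (-1 : ℝ) ^ 2 * 2 ^ 2)
    (ha : ∀ m : ℕ, 5 ≤ m → a m = 3 * a (m - 1) + (-1) * 2 * a (m - 2) +
      (-1 : ℝ) ^ (m - 1) * ((-1) - 3 - 2) + (2 : ℝ) ^ (m - 1) * (2 - 3 - (-1))) :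
    (∀ n : ℕ, 3 ≤ n → Odd n → a n = 2 ^ (n + 1)) ∧
      (∀ n : ℕ, 4 ≤ n → Even n → a n = 2 ^ (n + 1) + 2) := by
  have key : ∀ k : ℕ, a (k + 3) = 2 ^ (k + 4) + 1 + (-1 : ℝ) ^ (k + 3) ∧
      a (k + 4) = 2 ^ (k + 5) + 1 + (-1 : ℝ) ^ (k + 4) := by
    intro k
    induction k with
    | zero =>
      constructor
      · rw [show (0 + 3 : ℕ) = 3 from rfl, ha3]; norm_num
      · rw [show (0 + 4 : ℕ) = 4 from rfl, ha4]; norm_num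
    | succ n ih =>
      refine ⟨by rw [show n + 1 + 3 = n + 4 from rfl, show n + 1 + 4 = n + 5 from rfl]; exact ih.2, ?_⟩
      have h := ha (n + 5) (by omega)
      have h1 : n + 5 - 1 = n + 4 := rfl
      have h2 : n + 5 - 2 = n + 3 := rfl
      rw [h1, h2, ih.1, ih.2] at h
      rw [show n + 1 + 4 = n + 5 from rfl, show n + 1 + 5 = n + 6 from rfl, h]
      ring
  have closed : ∀ n : ℕ, 3 ≤ n → a n = 2 ^ (n + 1) + 1 + (-1 : ℝ) ^ n := by
    intro n hn
    obtain ⟨k, rfl⟩ : ∃ k, n = k + 3 := ⟨n - 3, by omega⟩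
    exact (key k).1
  constructor
  · intro n hn hodd
    rw [closed n hn, hodd.neg_one_pow]
    ring
  · intro n hn heven
    rw [closed n (by omega), heven.neg_one_pow]
    ring
end
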